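/- arXiv:math/9910172 — 2 statements merged into one kernel-verified Lean document; each statement's English description precedes it below -/
import Mathlib

section
/- For every nonzero a ∈ g_{−1}, the degree-zero part of the derived algebra of p^a equals ⁅a, g_1⁆: that is, span{⁅x, y⁆ : x, y ∈ p^a} ∩ g_0 = span{⁅a, x⁆ : x ∈ g_1}. In particular, span{⁅x, y⁆ : x ∈ g_1, y ∈ p^a_{−1}} = span{⁅a, x⁆ : x ∈ g_1}. -/
/-!
For `x ∈ g_1`, `c ∈ g_0` and `w ∈ g_{-1}` we have `⁅x, ⁅c, w⁆⁆ = ⁅⁅x, c⁆, w⁆`, since `⁅x, w⁆ ∈ g_0`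
is killed by `ad c` (P1). Peeling off the `ad c_i` one at a time gives `⁅g_1, p^a_{-1}⁆ ⊆ ⁅a, g_1⁆`,
and then the Leibniz rule gives `⁅g_k, p^a_{-k}⁆ ⊆ ⁅a, g_1⁆` for all `k > 0` by induction.
The derived algebra of `p^a` is the sum of the `⁅p^a_i, p^a_j⁆ ⊆ g_{i+j}`; as the grading is
independent, its degree-zero part is the sum of the `⁅p^a_i, p^a_{-i}⁆`, each inside `⁅a, g_1⁆`.
-/

variable {g : Type*} [LieRing g] [LieAlgebra ℂ g]

/-- `p^a_{−1}`: the span of all iterated brackets `(ad c_r)⋯(ad c_1)(a)` with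
`c_1, …, c_r ∈ g_0` (the empty list giving `a` itself). -/
noncomputable def paNegOne (G : ℤ → Submodule ℂ g) (a : g) : Submodule ℂ g :=
  Submodule.span ℂ
    {x | ∃ l : List g, (∀ c ∈ l, c ∈ G 0) ∧ x = l.foldr (fun c y => ⁅c, y⁆) a}

/-- `paNegK G a m = p^a_{−(m+1)}`: inductively, `p^a_{−k−1} = span ⁅p^a_{−1}, p^a_{−k}⁆`. -/
noncomputable def paNegK (G : ℤ → Submodule ℂ g) (a : g) : ℕ → Submodule ℂ g
  | 0 => paNegOne G a
  | m + 1 => Submodule.span ℂ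
      {z | ∃ x ∈ paNegOne G a, ∃ y ∈ paNegK G a m, z = ⁅x, y⁆}

/-- The family `p^a_j`: equal to `g_j` for `j ≥ 0` and to `p^a_{−k}` for `j = −k < 0`. -/
noncomputable def pa (G : ℤ → Submodule ℂ g) (a : g) (j : ℤ) : Submodule ℂ g :=
  if 0 ≤ j then G j else paNegK G a ((-j).toNat - 1)

open Submodule

section Lattice

variable {α ι : Type*} [CompleteLattice α] [IsModularLattice α]

theorem iSupIndep.iSup_inf_eq_of_le {G Q : ι → α} (hG : iSupIndep G) (hQ : ∀ k, Q k ≤ G k)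
    (i : ι) : (⨆ k, Q k) ⊓ G i = Q i := by
  have hrest : (⨆ (k) (_ : k ≠ i), Q k) ⊓ G i = ⊥ :=
    ((hG i).symm.mono_left (iSup₂_mono fun k _ => hQ k)).eq_bot
  rw [iSup_split_single Q i, sup_inf_assoc_of_le _ (hQ i), hrest, sup_bot_eq]

theorem iSupIndep.iSup_iSup_inf_eq_of_le_add [AddGroup ι] {G : ι → α} {X : ι → ι → α}
    (hG : iSupIndep G) (hX : ∀ i j, X i j ≤ G (i + j)) (k : ι) :
    (⨆ (i) (j), X i j) ⊓ G k = ⨆ i, X i (-i + k) := by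
  have regroup : ⨆ (i) (j), X i j = ⨆ (k) (i), X i (-i + k) :=
    le_antisymm
      (iSup₂_le fun i j => le_iSup₂_of_le (i + j) i (by rw [neg_add_cancel_left]))
      (iSup₂_le fun _ i => le_iSup₂ (f := X) i _)
  rw [regroup, hG.iSup_inf_eq_of_le fun k => iSup_le fun i => ?_]
  simpa only [add_neg_cancel_left] using hX i (-i + k)

end Lattice

section Bracket

variable {R L : Type*} [CommRing R] [LieRing L] [LieAlgebra R L]

theorem span_lie_eq_map₂_ad (P Q : Submodule R L) :
    span R {z | ∃ x ∈ P, ∃ y ∈ Q, z = ⁅x, y⁆} =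
      map₂ (LieAlgebra.ad R L : L →ₗ[R] Module.End R L) P Q := by
  rw [map₂_eq_span_image2]
  congr 1
  ext z
  simp [Set.mem_image2, eq_comm]

theorem span_lie_left_eq_map_ad (a : L) (P : Submodule R L) :
    span R {z | ∃ x ∈ P, z = ⁅a, x⁆} = P.map (LieAlgebra.ad R L a) := by
  rw [← span_eq P, ← span_image, span_eq P]
  congr 1
  ext z
  simp [eq_comm]

def IsLieGrading {ι : Type*} [Add ι] (G : ι → Submodule R L) : Prop :=
  ∀ i j, ∀ x ∈ G i, ∀ y ∈ G j, ⁅x, y⁆ ∈ G (i + j)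

theorem IsLieGrading.lie_mem {ι : Type*} [Add ι] {G : ι → Submodule R L} (hG : IsLieGrading G)
    {i j k : ι} {x y : L} (hx : x ∈ G i) (hy : y ∈ G j) (hk : i + j = k) : ⁅x, y⁆ ∈ G k :=
  hk ▸ hG i j x hx y hy

end Bracket

section Parabolic

variable {G : ℤ → Submodule ℂ g} {a : g}

theorem self_mem_paNegOne : a ∈ paNegOne G a :=
  subset_span ⟨[], by simp, rfl⟩

theorem paNegOne_le (hG : IsLieGrading G) (ha : a ∈ G (-1)) : paNegOne G a ≤ G (-1) := by
  rw [paNegOne, span_le]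
  rintro _ ⟨l, hl, rfl⟩
  induction l with
  | nil => exact ha
  | cons c l ih =>
    exact hG.lie_mem (hl c List.mem_cons_self) (ih fun d hd => hl d (List.mem_cons_of_mem c hd))
      (zero_add _)

theorem paNegK_le (hG : IsLieGrading G) (ha : a ∈ G (-1)) (m : ℕ) :
    paNegK G a m ≤ G (-(m + 1)) := by
  induction m with
  | zero => simpa [paNegK] using paNegOne_le hG ha
  | succ m ih =>
    rw [paNegK, span_le]
    rintro _ ⟨x, hx, y, hy, rfl⟩
    exact hG.lie_mem (paNegOne_le hG ha hx) (ih hy) (by push_cast; ring)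

theorem pa_of_nonneg {j : ℤ} (hj : 0 ≤ j) : pa G a j = G j := if_pos hj

theorem pa_neg_natCast_add_one (m : ℕ) : pa G a (-(m + 1)) = paNegK G a m := by
  rw [pa, if_neg (by omega)]
  congr

theorem pa_le (hG : IsLieGrading G) (ha : a ∈ G (-1)) (j : ℤ) : pa G a j ≤ G j := by
  rcases le_or_gt 0 j with hj | hj
  · exact (pa_of_nonneg hj).le
  · obtain ⟨m, rfl⟩ : ∃ m : ℕ, j = -(m + 1) := ⟨(-j).toNat - 1, by omega⟩
    rw [pa_neg_natCast_add_one]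
    exact paNegK_le hG ha m

theorem lie_foldr_mem_map_ad (hG : IsLieGrading G)
    (hP1 : ∀ x ∈ G 0, ∀ y ∈ G 0, ⁅x, y⁆ = 0) (ha : a ∈ G (-1)) (l : List g)
    (hl : ∀ c ∈ l, c ∈ G 0) {x : g} (hx : x ∈ G 1) :
    ⁅x, l.foldr (fun c y => ⁅c, y⁆) a⁆ ∈ (G 1).map (LieAlgebra.ad ℂ g a) := by
  induction l generalizing x with
  | nil =>
    rw [List.foldr_nil, ← lie_skew]
    exact neg_mem (mem_map_of_mem hx)
  | cons c l ih =>
    have hc : c ∈ G 0 := hl c List.mem_cons_self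
    have hl' : ∀ d ∈ l, d ∈ G 0 := fun d hd => hl d (List.mem_cons_of_mem c hd)
    have hw : l.foldr (fun c y => ⁅c, y⁆) a ∈ G (-1) :=
      paNegOne_le hG ha (subset_span ⟨l, hl', rfl⟩)
    rw [List.foldr_cons, leibniz_lie, hP1 c hc _ (hG.lie_mem hx hw (add_neg_cancel 1)), add_zero]
    exact ih hl' (hG.lie_mem hx hc (add_zero 1))

theorem lie_mem_map_ad_of_mem_paNegOne (hG : IsLieGrading G)
    (hP1 : ∀ x ∈ G 0, ∀ y ∈ G 0, ⁅x, y⁆ = 0) (ha : a ∈ G (-1)) {x y : g} (hx : x ∈ G 1)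
    (hy : y ∈ paNegOne G a) :
    ⁅x, y⁆ ∈ (G 1).map (LieAlgebra.ad ℂ g a) := by
  suffices paNegOne G a ≤ ((G 1).map (LieAlgebra.ad ℂ g a)).comap (LieAlgebra.ad ℂ g x) from
    this hy
  rw [paNegOne, span_le]
  rintro _ ⟨l, hl, rfl⟩
  exact lie_foldr_mem_map_ad hG hP1 ha l hl hx

theorem lie_mem_map_ad_of_mem_paNegK (hG : IsLieGrading G)
    (hP1 : ∀ x ∈ G 0, ∀ y ∈ G 0, ⁅x, y⁆ = 0) (ha : a ∈ G (-1)) (m : ℕ) {x y : g}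
    (hx : x ∈ G (m + 1)) (hy : y ∈ paNegK G a m) : ⁅x, y⁆ ∈ (G 1).map (LieAlgebra.ad ℂ g a) := by
  induction m generalizing x y with
  | zero => exact lie_mem_map_ad_of_mem_paNegOne hG hP1 ha (by simpa using hx) hy
  | succ m ih =>
    suffices
        paNegK G a (m + 1) ≤ ((G 1).map (LieAlgebra.ad ℂ g a)).comap (LieAlgebra.ad ℂ g x) from
      this hy
    rw [paNegK, span_le]
    rintro _ ⟨u, hu, v, hv, rfl⟩
    have hxu : ⁅x, u⁆ ∈ G (m + 1) := hG.lie_mem hx (paNegOne_le hG ha hu) (by push_cast; ring)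
    have hxv : ⁅x, v⁆ ∈ G 1 := hG.lie_mem hx (paNegK_le hG ha m hv) (by push_cast; ring)
    rw [SetLike.mem_coe, mem_comap, LieAlgebra.ad_apply, leibniz_lie, ← lie_skew u]
    exact add_mem (ih hxu hv) (neg_mem (lie_mem_map_ad_of_mem_paNegOne hG hP1 ha hxv hu))

theorem map₂_ad_pa_pa_neg_le (hG : IsLieGrading G)
    (hP1 : ∀ x ∈ G 0, ∀ y ∈ G 0, ⁅x, y⁆ = 0) (ha : a ∈ G (-1)) (i : ℤ) :
    map₂ (LieAlgebra.ad ℂ g : g →ₗ[ℂ] Module.End ℂ g) (pa G a i) (pa G a (-i)) ≤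
      (G 1).map (LieAlgebra.ad ℂ g a) := by
  rw [map₂_le]
  intro x hx y hy
  change ⁅x, y⁆ ∈ _
  rcases lt_trichotomy i 0 with hi | rfl | hi
  · obtain ⟨m, rfl⟩ : ∃ m : ℕ, i = -(m + 1) := ⟨(-i).toNat - 1, by omega⟩
    rw [pa_neg_natCast_add_one] at hx
    rw [neg_neg, pa_of_nonneg (by positivity)] at hy
    rw [← lie_skew]
    exact neg_mem (lie_mem_map_ad_of_mem_paNegK hG hP1 ha m hy hx)
  · rw [neg_zero] at hy
    rw [pa_of_nonneg le_rfl] at hx hy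
    rw [hP1 x hx y hy]
    exact zero_mem _
  · obtain ⟨m, rfl⟩ : ∃ m : ℕ, i = m + 1 := ⟨i.toNat - 1, by omega⟩
    rw [pa_of_nonneg hi.le] at hx
    rw [pa_neg_natCast_add_one] at hy
    exact lie_mem_map_ad_of_mem_paNegK hG hP1 ha m hx hy

end Parabolic

theorem stmt2_general {g : Type*} [LieRing g] [LieAlgebra ℂ g]
    (G : ℤ → Submodule ℂ g)
    (hdirect : DirectSum.IsInternal G)
    (hgrade : ∀ i j : ℤ, ∀ x ∈ G i, ∀ y ∈ G j, ⁅x, y⁆ ∈ G (i + j))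
    (hP1 : ∀ x ∈ G 0, ∀ y ∈ G 0, ⁅x, y⁆ = 0)
    (a : g) (ha : a ∈ G (-1)) :
    Submodule.span ℂ
        {z : g | ∃ x ∈ (⨆ j : ℤ, pa G a j), ∃ y ∈ (⨆ j : ℤ, pa G a j), z = ⁅x, y⁆}
      ⊓ G 0
      = Submodule.span ℂ {z : g | ∃ x ∈ G 1, z = ⁅a, x⁆}
    ∧ Submodule.span ℂ {z : g | ∃ x ∈ G 1, ∃ y ∈ paNegOne G a, z = ⁅x, y⁆}
      = Submodule.span ℂ {z : g | ∃ x ∈ G 1, z = ⁅a, x⁆} := by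
  have hG : IsLieGrading G := hgrade
  have ha_pa : a ∈ pa G a (-1) := by
    simpa using (pa_neg_natCast_add_one (G := G) (a := a) 0).ge self_mem_paNegOne
  rw [span_lie_left_eq_map_ad, span_lie_eq_map₂_ad, span_lie_eq_map₂_ad, map₂_iSup_left]
  simp_rw [map₂_iSup_right]
  refine ⟨le_antisymm ?_ ?_, le_antisymm ?_ ?_⟩
  · rw [hdirect.submodule_iSupIndep.iSup_iSup_inf_eq_of_le_add (fun i j => map₂_le.2
      fun x hx y hy => hG i j x (pa_le hG ha i hx) y (pa_le hG ha j hy))]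
    exact iSup_le fun i => by simpa using map₂_ad_pa_pa_neg_le hG hP1 ha i
  · rw [map_le_iff_le_comap]
    intro x hx
    exact ⟨mem_iSup_of_mem (-1) (mem_iSup_of_mem 1 (apply_mem_map₂ _ ha_pa (by
      rwa [pa_of_nonneg zero_le_one]))), hG.lie_mem ha hx (neg_add_cancel 1)⟩
  · exact map₂_le.2 fun x hx y hy => lie_mem_map_ad_of_mem_paNegOne hG hP1 ha hx hy
  · rw [map_le_iff_le_comap]
    intro x hx
    rw [mem_comap, LieAlgebra.ad_apply, ← lie_skew]
    exact neg_mem (apply_mem_map₂ _ hx self_mem_paNegOne)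

/-- Lemma 2.2 b: `[p^a, p^a] ∩ g_0 = [a, g_1]`; in particular
`[g_1, p^a_{−1}] = [a, g_1]` (all as spans). -/
theorem stmt2 {g : Type*} [LieRing g] [LieAlgebra ℂ g]
    (G : ℤ → Submodule ℂ g)
    (hdirect : DirectSum.IsInternal G)
    (hgrade : ∀ i j : ℤ, ∀ x ∈ G i, ∀ y ∈ G j, ⁅x, y⁆ ∈ G (i + j))
    (hP1 : ∀ x ∈ G 0, ∀ y ∈ G 0, ⁅x, y⁆ = 0)
    (hP2 : ∀ k : ℤ, 0 < k → ∀ b ∈ G (-k), (∀ x ∈ G 1, ⁅b, x⁆ = 0) → b = 0)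
    (a : g) (ha : a ∈ G (-1)) (ha0 : a ≠ 0) :
    Submodule.span ℂ
        {z : g | ∃ x ∈ (⨆ j : ℤ, pa G a j), ∃ y ∈ (⨆ j : ℤ, pa G a j), z = ⁅x, y⁆}
      ⊓ G 0
      = Submodule.span ℂ {z : g | ∃ x ∈ G 1, z = ⁅a, x⁆}
    ∧ Submodule.span ℂ {z : g | ∃ x ∈ G 1, ∃ y ∈ paNegOne G a, z = ⁅x, y⁆}
      = Submodule.span ℂ {z : g | ∃ x ∈ G 1, z = ⁅a, x⁆} :=
  stmt2_general G hdirect hgrade hP1 a ha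
end

section
/- Let n ≥ 1 be an integer and Δ ∈ ℂ[[x]], and set F = n·Δ + ∂((E−1)·Δ). Then F is a quasipolynomial if and only if there exists G ∈ ℂ[[x]] such that Δ = [∂]_n(G) and (E−1)·G is a quasipolynomial. (This is the characterization of quasifiniteness of the W_∞^{(n)}-module L(λ) in terms of its generating series Δ_λ(x): L(λ) is quasifinite iff nΔ_λ(x) + d/dx((e^x−1)Δ_λ(x)) is a quasipolynomial, iff Δ_λ(x) = [d/dx]_n(φ_λ(x)/(e^x−1)) for a quasipolynomial φ_λ with φ_λ(0)=0.) -/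
open Polynomial

/-- The derivation `∂ = d/dx` on `ℂ[[x]]`, as a linear endomorphism. -/
noncomputable def Dop : Module.End ℂ (PowerSeries ℂ) :=
  (PowerSeries.derivative ℂ).toLinearMap

/-- The exponential power series `E = e^x = Σ_{m≥0} x^m/m!`. -/
noncomputable def E : PowerSeries ℂ := PowerSeries.exp ℂ

/-- The falling-factorial polynomial `[w]_n = w(w−1)⋯(w−n+1)` (with `[w]_0 = 1`). -/
noncomputable def ffp (n : ℕ) : ℂ[X] :=
  ∏ i ∈ Finset.range n, (X - C (i : ℂ))

/-- The operator `[∂]_n = ∂(∂−1)⋯(∂−n+1)` on `ℂ[[x]]`: the polynomial `[w]_n`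
evaluated at `∂`. -/
noncomputable def ffD (n : ℕ) : Module.End ℂ (PowerSeries ℂ) :=
  Polynomial.aeval Dop (ffp n)


/-- A formal power series is a quasipolynomial iff it satisfies a nontrivial linear
differential equation with constant coefficients (equivalently, it is the Taylor
series of a finite sum `Σ p_i(x)e^{α_i x}`). -/
def IsQuasiPoly (F : PowerSeries ℂ) : Prop :=
  ∃ q : ℂ[X], q ≠ 0 ∧ Polynomial.aeval Dop q F = 0

/-!
Write `H = [∂]_n G`. Since `∂ ∘ E = E ∘ (∂ + 1)` and `[w+1]_{n+1} = (w+1)[w]_n`,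
`[∂]_{n+1}(E·G) = E·(∂ + 1)H`, while `[∂]_{n+1} G = (∂ - n)H`; subtracting gives
`[∂]_{n+1}((E−1)·G) = n·H + ∂((E−1)·H)`. As `[∂]_n` is onto, every `Δ` is such an `H`,
so the series in question is `[∂]_{n+1}((E−1)·G)`, and applying a nonzero polynomial in `∂`
neither creates nor destroys quasipolynomiality.
-/

theorem Polynomial.aeval_mul_of_mul_eq {R A : Type*} [CommSemiring R] [Semiring A] [Algebra R A]
    {a b l : A} (h : a * l = l * b) (p : R[X]) : aeval a p * l = l * aeval b p := by
  induction p using Polynomial.induction_on' with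
  | add p q hp hq => rw [map_add, map_add, add_mul, mul_add, hp, hq]
  | monomial k r =>
    have hpow : l * b ^ k = a ^ k * l := SemiconjBy.pow_right h.symm k
    rw [aeval_monomial, aeval_monomial, mul_assoc, ← hpow, ← mul_assoc, ← mul_assoc,
      Algebra.commutes]

theorem ffp_succ (n : ℕ) : ffp (n + 1) = ffp n * (X - C (n : ℂ)) :=
  Finset.prod_range_succ _ n

theorem ffp_monic (n : ℕ) : (ffp n).Monic :=
  monic_prod_of_monic _ _ fun i _ => monic_X_sub_C (i : ℂ)

theorem ffp_succ_comp_X_add_one (n : ℕ) : (ffp (n + 1)).comp (X + C 1) = (X + C 1) * ffp n := by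
  rw [ffp, prod_comp, Finset.prod_range_succ', mul_comm]
  simp only [sub_comp, add_comp, X_comp, C_comp, Nat.cast_zero, map_zero, sub_zero,
    Nat.cast_succ, C_add]
  congr 1
  exact Finset.prod_congr rfl fun i _ => by ring

theorem Dop_mul (f g : PowerSeries ℂ) : Dop (f * g) = f * Dop g + g * Dop f := by
  simp only [Dop, Derivation.coeFn_coe, Derivation.leibniz, smul_eq_mul]

theorem Dop_E : Dop E = E := by
  ext m
  have hm : (m : ℂ) + 1 ≠ 0 := Nat.cast_add_one_ne_zero m
  simp only [Dop, E, Derivation.coeFn_coe, PowerSeries.coeff_derivative, PowerSeries.coeff_exp,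
    Nat.factorial_succ, Nat.cast_mul, Nat.cast_succ, map_inv₀, map_mul, map_add, map_one,
    map_natCast, one_div]
  field_simp

theorem Dop_E_mul (H : PowerSeries ℂ) : Dop (E * H) = E * (Dop H + H) := by
  rw [Dop_mul, Dop_E]; ring

theorem aeval_Dop_E_mul (p : ℂ[X]) (H : PowerSeries ℂ) :
    aeval Dop p (E * H) = E * aeval Dop (p.comp (X + C 1)) H := by
  have hconj : Dop * LinearMap.mulLeft ℂ E = LinearMap.mulLeft ℂ E * (Dop + 1) := by
    ext1 H; exact Dop_E_mul H
  have := congrArg (· H) (aeval_mul_of_mul_eq hconj p)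
  simpa only [Module.End.mul_apply, LinearMap.mulLeft_apply, aeval_comp, map_add, aeval_X,
    aeval_C, map_one] using this

theorem Dop_sub_algebraMap_surjective (a : ℂ) :
    Function.Surjective (Dop - algebraMap ℂ (Module.End ℂ (PowerSeries ℂ)) a) := by
  intro H
  -- the coefficients of a preimage are determined recursively by `(m+1) g_{m+1} - a g_m = h_m`
  let g : ℕ → ℂ := fun m =>
    Nat.rec 0 (fun m gm => (PowerSeries.coeff m H + a * gm) / (m + 1)) m
  have hg (m : ℕ) : g (m + 1) = (PowerSeries.coeff m H + a * g m) / (m + 1) := rfl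
  refine ⟨PowerSeries.mk g, PowerSeries.ext fun m => ?_⟩
  have hm : (m : ℂ) + 1 ≠ 0 := Nat.cast_add_one_ne_zero m
  simp only [Dop, LinearMap.sub_apply, Module.algebraMap_end_apply, map_sub, Derivation.coeFn_coe,
    PowerSeries.coeff_derivative, PowerSeries.coeff_mk, hg, PowerSeries.coeff_smul, smul_eq_mul]
  field_simp
  ring

theorem ffD_surjective (n : ℕ) : Function.Surjective (ffD n) := by
  induction n with
  | zero => exact fun H => ⟨H, by simp [ffD, ffp]⟩
  | succ n ih =>
    rw [ffD, ffp_succ, map_mul, map_sub, aeval_X, aeval_C, Module.End.coe_mul]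
    exact ih.comp (Dop_sub_algebraMap_surjective n)

theorem natCast_mul_ffD_add_Dop (n : ℕ) (G : PowerSeries ℂ) :
    (n : PowerSeries ℂ) * ffD n G + Dop ((E - 1) * ffD n G) = ffD (n + 1) ((E - 1) * G) := by
  have hE : ffD (n + 1) (E * G) = E * (Dop (ffD n G) + ffD n G) := by
    rw [ffD, aeval_Dop_E_mul, ffp_succ_comp_X_add_one, map_mul, map_add, aeval_X, aeval_C,
      map_one, Module.End.mul_apply, LinearMap.add_apply, Module.End.one_apply, ffD]
  have h1 : ffD (n + 1) G = Dop (ffD n G) - (n : ℂ) • ffD n G := by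
    rw [ffD, ffp_succ, mul_comm, map_mul, map_sub, aeval_X, aeval_C, Module.End.mul_apply,
      LinearMap.sub_apply, Module.algebraMap_end_apply, ffD]
  have hn : (n : PowerSeries ℂ) * ffD n G = (n : ℂ) • ffD n G := by
    rw [Algebra.smul_def, map_natCast]
  simp only [sub_mul, one_mul, map_sub]
  rw [Dop_E_mul, hE, h1, hn]
  abel

theorem IsQuasiPoly.aeval {F : PowerSeries ℂ} (hF : IsQuasiPoly F) (p : ℂ[X]) :
    IsQuasiPoly (Polynomial.aeval Dop p F) := by
  obtain ⟨q, hq, hqF⟩ := hF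
  refine ⟨q, hq, ?_⟩
  rw [← Module.End.mul_apply, ← map_mul, mul_comm, map_mul, Module.End.mul_apply, hqF, map_zero]

theorem IsQuasiPoly.of_aeval {F : PowerSeries ℂ} {p : ℂ[X]} (hp : p ≠ 0)
    (hF : IsQuasiPoly (Polynomial.aeval Dop p F)) : IsQuasiPoly F := by
  obtain ⟨q, hq, hqF⟩ := hF
  exact ⟨q * p, mul_ne_zero hq hp, by rwa [map_mul, Module.End.mul_apply]⟩

theorem isQuasiPoly_ffD_iff (n : ℕ) (F : PowerSeries ℂ) :
    IsQuasiPoly (ffD n F) ↔ IsQuasiPoly F :=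
  ⟨IsQuasiPoly.of_aeval (ffp_monic n).ne_zero, fun hF => hF.aeval (ffp n)⟩

theorem stmt14_general (n : ℕ) (Δ : PowerSeries ℂ) :
    IsQuasiPoly ((n : PowerSeries ℂ) * Δ + Dop ((E - 1) * Δ)) ↔
      ∃ G : PowerSeries ℂ, Δ = ffD n G ∧ IsQuasiPoly ((E - 1) * G) := by
  constructor
  · intro hF
    obtain ⟨G, rfl⟩ := ffD_surjective n Δ
    rw [natCast_mul_ffD_add_Dop, isQuasiPoly_ffD_iff] at hF
    exact ⟨G, rfl, hF⟩
  · rintro ⟨G, rfl, hG⟩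
    rwa [natCast_mul_ffD_add_Dop, isQuasiPoly_ffD_iff]

/-- Theorem 4.2: for n ≥ 1, `F = n·Δ + ∂((E−1)·Δ)` is a quasipolynomial
iff `Δ = [∂]_n G` for some `G` with `(E−1)·G` a quasipolynomial. -/
theorem stmt14 (n : ℕ) (hn : 1 ≤ n) (Δ : PowerSeries ℂ) :
    IsQuasiPoly ((n : PowerSeries ℂ) * Δ + Dop ((E - 1) * Δ)) ↔
      ∃ G : PowerSeries ℂ, Δ = ffD n G ∧ IsQuasiPoly ((E - 1) * G) :=
  stmt14_general n Δ
end
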